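/- arXiv:1805.00723 — 9 statements merged into one kernel-verified Lean document; each statement's English description precedes it below -/
import Mathlib

section
/- Let A be a unital algebra and P a Rota–Baxter operator of weight 0 on A. If P(1) is a scalar multiple of 1, then P(1) = 0, P² = 0, and the image of P is contained in the kernel of P. -/
/-- A Rota–Baxter operator of weight `lam` on a (not necessarily associative)
algebra `A` over a field `F`. -/
def IsRotaBaxter (F : Type*) {A : Type*} [Field F] [NonUnitalNonAssocRing A]
    [Module F A] (lam : F) (R : A →ₗ[F] A) : Prop :=
  ∀ x y : A, R x * R y = R (R x * y + x * R y + lam • (x * y))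

/-!
Evaluating the Rota–Baxter identity at `(x, 1)` with `P 1 = c • 1` leaves `P (P x) = -λ • P x`,
so in weight zero `P² = 0`. Then `c • P 1 = P (P 1) = 0`, so `c = 0` or `P 1 = 0`; either way
`P 1 = c • 1 = 0`.
-/

namespace IsRotaBaxter

variable {F A : Type*} [Field F] [NonAssocRing A] [Module F A] [SMulCommClass F A A]
  {lam c : F} {P : A →ₗ[F] A}

theorem map_map_of_map_one_eq_smul (hP : IsRotaBaxter F lam P) (hc : P 1 = c • 1) (x : A) :
    P (P x) = -lam • P x := by
  have h := hP x 1
  simp only [hc, mul_smul_comm, mul_one, map_add, map_smul] at h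
  rw [add_right_comm] at h
  rw [neg_smul, eq_neg_iff_add_eq_zero]
  exact add_eq_right.mp h.symm

theorem map_map_eq_zero_of_map_one_eq_smul (hP : IsRotaBaxter F 0 P) (hc : P 1 = c • 1)
    (x : A) : P (P x) = 0 := by
  simpa using hP.map_map_of_map_one_eq_smul hc x

end IsRotaBaxter

theorem LinearMap.map_eq_zero_of_map_map_eq_zero_of_map_eq_smul {R M : Type*} [Semiring R]
    [IsCancelMulZero R] [AddCommMonoid M] [Module R M] [Module.IsTorsionFree R M]
    {P : M →ₗ[R] M} {c : R} {e : M}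
    (hPP : ∀ x, P (P x) = 0) (hc : P e = c • e) : P e = 0 := by
  have hcc : c • c • e = 0 := by
    simpa only [hc, map_smul] using hPP e
  rcases smul_eq_zero.mp hcc with h | h
  · rw [hc, h, zero_smul]
  · rwa [hc]

theorem rb_weight_zero_scalar_P1_general {F A : Type*} [Field F]
    [NonAssocRing A] [Module F A] [SMulCommClass F A A]
    (P : A →ₗ[F] A) (hP : IsRotaBaxter F (0 : F) P)
    (hscalar : ∃ c : F, P 1 = c • (1 : A)) :
    P 1 = 0 ∧ P ∘ₗ P = 0 ∧ LinearMap.range P ≤ LinearMap.ker P := by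
  obtain ⟨c, hc⟩ := hscalar
  have hPP : ∀ x, P (P x) = 0 := hP.map_map_eq_zero_of_map_one_eq_smul hc
  have hcomp : P ∘ₗ P = 0 := LinearMap.ext hPP
  exact ⟨LinearMap.map_eq_zero_of_map_map_eq_zero_of_map_eq_smul hPP hc, hcomp,
    LinearMap.range_le_ker_iff.mpr hcomp⟩

/-- If `P` is a weight-zero RB-operator on a unital algebra with `P(1)` scalar,
then `P(1) = 0`, `P² = 0` and `Im P ⊆ ker P`. -/
theorem rb_weight_zero_scalar_P1 {F A : Type*} [Field F] [CharZero F]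
    [NonAssocRing A] [Module F A] [SMulCommClass F A A] [IsScalarTower F A A]
    (P : A →ₗ[F] A) (hP : IsRotaBaxter F (0 : F) P)
    (hscalar : ∃ c : F, P 1 = c • (1 : A)) :
    P 1 = 0 ∧ P ∘ₗ P = 0 ∧ LinearMap.range P ≤ LinearMap.ker P :=
  rb_weight_zero_scalar_P1_general P hP hscalar
end

section
/- Let A be a unital algebra over a field of characteristic zero and P a Rota–Baxter operator of weight 0 on A. Then 1 does not lie in the image of P. -/
theorem IsRotaBaxter.apply_mul_apply_of_weight_zero {F A : Type*} [Field F]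
    [NonUnitalNonAssocRing A] [Module F A] {R : A →ₗ[F] A} (hR : IsRotaBaxter F (0 : F) R)
    (x y : A) : R x * R y = R (R x * y + x * R y) := by
  simpa only [zero_smul, add_zero] using hR x y

theorem rb_weight_zero_one_not_in_image_general {F A : Type*} [Field F]
    [NonAssocRing A] [Nontrivial A] [Module F A]
    (P : A →ₗ[F] A) (hP : IsRotaBaxter F (0 : F) P) :
    (1 : A) ∉ LinearMap.range P := by
  rintro ⟨e, he⟩
  -- the identity at `(e, e)` reads `1 = P (e + e) = 1 + 1`
  have h := hP.apply_mul_apply_of_weight_zero e e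
  simp only [he, one_mul, mul_one, map_add] at h
  exact one_ne_zero (left_eq_add.mp h)

/-- For a weight-zero RB-operator `P` on a unital algebra over a field of
characteristic zero, the unit `1` is not in the image of `P`. -/
theorem rb_weight_zero_one_not_in_image {F A : Type*} [Field F] [CharZero F]
    [NonAssocRing A] [Nontrivial A] [Module F A] [SMulCommClass F A A] [IsScalarTower F A A]
    (P : A →ₗ[F] A) (hP : IsRotaBaxter F (0 : F) P) :
    (1 : A) ∉ LinearMap.range P :=
  rb_weight_zero_one_not_in_image_general P hP
end

section
/- Let a (possibly nonassociative) algebra A be a direct sum of two ideals A₁ and A₂, and let R be a Rota–Baxter operator of weight λ on A. Then the composition Pr₁ ∘ R, where Pr₁ is the projection of A onto A₁ along A₂, restricted to A₁, is a Rota–Baxter operator of weight λ on A₁. -/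
namespace Submodule

variable {F A : Type*} [Semiring F] [NonUnitalNonAssocRing A] [Module F A]

def IsTwoSidedIdeal (I : Submodule F A) : Prop :=
  ∀ a x : A, x ∈ I → a * x ∈ I ∧ x * a ∈ I

theorem IsTwoSidedIdeal.mul_eq_zero_of_disjoint {A₁ A₂ : Submodule F A}
    (h₁ : A₁.IsTwoSidedIdeal) (h₂ : A₂.IsTwoSidedIdeal) (hd : Disjoint A₁ A₂)
    {u v : A} (hu : u ∈ A₁) (hv : v ∈ A₂) : u * v = 0 :=
  disjoint_def.mp hd _ (h₁ v u hu).2 (h₂ u v hv).1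

section Projection

variable {A₁ A₂ : Submodule F A} {pr : A →ₗ[F] A}

theorem apply_mem_and_sub_apply_mem_of_isCompl (hcompl : IsCompl A₁ A₂)
    (hpr : ∀ x ∈ A₁, ∀ y ∈ A₂, pr (x + y) = x) (a : A) : pr a ∈ A₁ ∧ a - pr a ∈ A₂ := by
  obtain ⟨p, s, hp, hs, rfl⟩ := codisjoint_iff_exists_add_eq.mp hcompl.codisjoint a
  rw [hpr p hp s hs, add_sub_cancel_left]
  exact ⟨hp, hs⟩

theorem mul_eq_apply_mul_of_isCompl (h₁ : A₁.IsTwoSidedIdeal) (h₂ : A₂.IsTwoSidedIdeal)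
    (hcompl : IsCompl A₁ A₂) (hpr : ∀ x ∈ A₁, ∀ y ∈ A₂, pr (x + y) = x)
    (a : A) {x : A} (hx : x ∈ A₁) : a * x = pr a * x := by
  have hs := (apply_mem_and_sub_apply_mem_of_isCompl hcompl hpr a).2
  calc a * x = pr a * x + (a - pr a) * x := by rw [← add_mul, add_sub_cancel]
    _ = pr a * x := by rw [h₂.mul_eq_zero_of_disjoint h₁ hcompl.disjoint.symm hs hx, add_zero]

theorem mul_eq_mul_apply_of_isCompl (h₁ : A₁.IsTwoSidedIdeal) (h₂ : A₂.IsTwoSidedIdeal)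
    (hcompl : IsCompl A₁ A₂) (hpr : ∀ x ∈ A₁, ∀ y ∈ A₂, pr (x + y) = x)
    (a : A) {x : A} (hx : x ∈ A₁) : x * a = x * pr a := by
  have hs := (apply_mem_and_sub_apply_mem_of_isCompl hcompl hpr a).2
  calc x * a = x * pr a + x * (a - pr a) := by rw [← mul_add, add_sub_cancel]
    _ = x * pr a := by rw [h₁.mul_eq_zero_of_disjoint h₂ hcompl.disjoint hx hs, add_zero]

theorem map_mul_of_isCompl (h₁ : A₁.IsTwoSidedIdeal) (h₂ : A₂.IsTwoSidedIdeal)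
    (hcompl : IsCompl A₁ A₂) (hpr : ∀ x ∈ A₁, ∀ y ∈ A₂, pr (x + y) = x) (a b : A) :
    pr (a * b) = pr a * pr b := by
  have hpa := (apply_mem_and_sub_apply_mem_of_isCompl hcompl hpr a).1
  obtain ⟨hpb, hsb⟩ := apply_mem_and_sub_apply_mem_of_isCompl hcompl hpr b
  have hab : a * b = pr a * pr b + (a - pr a) * (b - pr b) := by
    rw [mul_sub, sub_mul, sub_mul, mul_eq_apply_mul_of_isCompl h₁ h₂ hcompl hpr a hpb,
      mul_eq_mul_apply_of_isCompl h₁ h₂ hcompl hpr b hpa]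
    abel
  rw [hab, hpr _ (h₁ _ _ hpb).1 _ (h₂ _ _ hsb).1]

end Projection

end Submodule

theorem rb_projection_onto_ideal_general {F A : Type*} [Field F] [NonUnitalNonAssocRing A]
    [Module F A]
    (lam : F) (A₁ A₂ : Submodule F A)
    (hI₁ : ∀ a x : A, x ∈ A₁ → a * x ∈ A₁ ∧ x * a ∈ A₁)
    (hI₂ : ∀ a x : A, x ∈ A₂ → a * x ∈ A₂ ∧ x * a ∈ A₂)
    (hcompl : IsCompl A₁ A₂)
    (R : A →ₗ[F] A) (hR : IsRotaBaxter F lam R)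
    (pr : A →ₗ[F] A)
    (hpr : ∀ x ∈ A₁, ∀ y ∈ A₂, pr (x + y) = x) :
    ∀ x ∈ A₁, ∀ y ∈ A₁,
      pr (R x) * pr (R y)
        = pr (R (pr (R x) * y + x * pr (R y) + lam • (x * y))) := by
  intro x hx y hy
  rw [← Submodule.map_mul_of_isCompl hI₁ hI₂ hcompl hpr, hR,
    Submodule.mul_eq_apply_mul_of_isCompl hI₁ hI₂ hcompl hpr (R x) hy,
    Submodule.mul_eq_mul_apply_of_isCompl hI₁ hI₂ hcompl hpr (R y) hx]

/-- If `A = A₁ ⊕ A₂` is a direct sum of two ideals and `R` is an RB-operator of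
weight `lam` on `A`, then `Pr₁ ∘ R` restricted to `A₁` is an RB-operator of
weight `lam` on `A₁`. Here the projection `Pr₁` onto `A₁` along `A₂` is encoded
as a linear map `pr` with range in `A₁` that is the identity on `A₁` and kills `A₂`. -/
theorem rb_projection_onto_ideal {F A : Type*} [Field F] [NonUnitalNonAssocRing A]
    [Module F A] [SMulCommClass F A A] [IsScalarTower F A A]
    (lam : F) (A₁ A₂ : Submodule F A)
    (hI₁ : ∀ a x : A, x ∈ A₁ → a * x ∈ A₁ ∧ x * a ∈ A₁)
    (hI₂ : ∀ a x : A, x ∈ A₂ → a * x ∈ A₂ ∧ x * a ∈ A₂)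
    (hcompl : IsCompl A₁ A₂)
    (R : A →ₗ[F] A) (hR : IsRotaBaxter F lam R)
    (pr : A →ₗ[F] A)
    (hpr : ∀ x ∈ A₁, ∀ y ∈ A₂, pr (x + y) = x) :
    ∀ x ∈ A₁, ∀ y ∈ A₁,
      pr (R x) * pr (R y)
        = pr (R (pr (R x) * y + x * pr (R y) + lam • (x * y))) :=
  rb_projection_onto_ideal_general lam A₁ A₂ hI₁ hI₂ hcompl R hR pr hpr
end

section
/- Let A be an associative unital Rota–Baxter algebra of weight λ with RB-operator R over a field of characteristic zero. Then for all n ≥ 1: n!·Rⁿ(1) = Σ_{k=1}^{n} (-1)^{n-k} λ^{n-k} s(n,k) (R(1))^k, where s(n,k) are Stirling numbers of the first kind. -/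
/-- Unsigned Stirling numbers of the first kind. -/
def stirlingFirst : ℕ → ℕ → ℕ
  | 0, 0 => 1
  | 0, _ + 1 => 0
  | _ + 1, 0 => 0
  | n + 1, k + 1 => stirlingFirst n k + n * stirlingFirst n (k + 1)

theorem stirlingFirst_eq_nat_stirlingFirst :
    ∀ n k : ℕ, stirlingFirst n k = Nat.stirlingFirst n k
  | 0, 0 | 0, _ + 1 | _ + 1, 0 => rfl
  | n + 1, k + 1 => by
    rw [stirlingFirst, Nat.stirlingFirst_succ_succ, stirlingFirst_eq_nat_stirlingFirst n k,
      stirlingFirst_eq_nat_stirlingFirst n (k + 1), add_comm]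

open Polynomial Finset

noncomputable def descPochhammerStep {R : Type*} [CommRing R] (c : R) (n : ℕ) : R[X] :=
  ∏ i ∈ range n, (X - C (i * c))

section descPochhammerStep

variable {R : Type*} [CommRing R] (c : R)

theorem descPochhammerStep_succ (n : ℕ) :
    descPochhammerStep c (n + 1) = (X - C (n * c)) * descPochhammerStep c n := by
  rw [descPochhammerStep, prod_range_succ, mul_comm]
  rfl

theorem natDegree_descPochhammerStep_le (n : ℕ) : (descPochhammerStep c n).natDegree ≤ n :=
  (natDegree_prod_le _ _).trans <| (sum_le_sum fun _ _ => natDegree_X_sub_C_le _).trans (by simp)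

theorem coeff_descPochhammerStep (n k : ℕ) :
    (descPochhammerStep c n).coeff k = (-c) ^ (n - k) * Nat.stirlingFirst n k := by
  induction n generalizing k with
  | zero => cases k <;> simp [descPochhammerStep, coeff_one]
  | succ n ih =>
    rw [descPochhammerStep_succ]
    cases k with
    | zero => cases n <;> simp [mul_coeff_zero, ih]
    | succ k =>
      rw [coeff_X_sub_C_mul, ih, ih, Nat.stirlingFirst_succ_succ]
      rcases lt_or_ge k n with hkn | hnk
      · obtain ⟨m, rfl⟩ := Nat.exists_eq_add_of_lt hkn
        rw [show k + m + 1 + 1 - (k + 1) = m + 1 by omega, show k + m + 1 - k = m + 1 by omega,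
          show k + m + 1 - (k + 1) = m by omega]
        push_cast
        ring
      · rw [Nat.stirlingFirst_eq_zero_of_lt (by omega : n < k + 1),
          show n + 1 - (k + 1) = n - k by omega]
        push_cast
        ring

end descPochhammerStep

theorem Module.End.pow_succ_apply {F M : Type*} [Semiring F] [AddCommMonoid M] [Module F M]
    (f : Module.End F M) (n : ℕ) (x : M) : (f ^ (n + 1)) x = f ((f ^ n) x) := by
  rw [pow_succ', Module.End.mul_apply]

namespace IsRotaBaxter

variable {F A : Type*} [Field F] [Ring A] [Algebra F A] {lam : F} {R : A →ₗ[F] A}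

theorem apply_one_mul_pow_apply_one (hR : IsRotaBaxter F lam R) (n : ℕ) :
    R 1 * (R ^ n) 1 = ((n + 1 : ℕ) : F) • (R ^ (n + 1)) 1 + (n * lam) • (R ^ n) 1 := by
  induction n with
  | zero => simp
  | succ n ih =>
    rw [Module.End.pow_succ_apply R n, hR, one_mul, one_mul, map_add, map_add, map_smul, ih, map_add,
      map_smul, map_smul, ← Module.End.pow_succ_apply R n, ← Module.End.pow_succ_apply R (n + 1)]
    push_cast
    module

theorem factorial_smul_pow_apply_one (hR : IsRotaBaxter F lam R) (n : ℕ) :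
    (n.factorial : F) • (R ^ n) 1 = aeval (R 1) (descPochhammerStep lam n) := by
  induction n with
  | zero => simp [descPochhammerStep]
  | succ n ih =>
    have hstep : ((n + 1 : ℕ) : F) • (R ^ (n + 1)) 1 =
        R 1 * (R ^ n) 1 - (n * lam) • (R ^ n) 1 := by
      rw [hR.apply_one_mul_pow_apply_one n, add_sub_cancel_right]
    calc ((n + 1).factorial : F) • (R ^ (n + 1)) 1
        = (n.factorial : F) • (((n + 1 : ℕ) : F) • (R ^ (n + 1)) 1) := by
          rw [Nat.factorial_succ, Nat.cast_mul, mul_comm, mul_smul]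
      _ = (R 1 - algebraMap F A (n * lam)) * ((n.factorial : F) • (R ^ n) 1) := by
          rw [hstep, sub_mul, smul_sub, mul_smul_comm, ← Algebra.smul_def, smul_comm]
      _ = aeval (R 1) (descPochhammerStep lam (n + 1)) := by
          rw [ih, descPochhammerStep_succ, map_mul (aeval (R 1)), map_sub, aeval_X, aeval_C]

end IsRotaBaxter

theorem rb_stirling_first_general {F A : Type*} [Field F] [Ring A] [Algebra F A]
    (lam : F) (R : A →ₗ[F] A) (hR : IsRotaBaxter F lam R) (n : ℕ) (hn : 1 ≤ n) :
    ((Nat.factorial n : ℕ) : F) • ((R ^ n) (1 : A))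
      = ∑ k ∈ Finset.Icc 1 n,
          ((-1 : F) ^ (n - k) * lam ^ (n - k) * (stirlingFirst n k : F)) • (R 1) ^ k := by
  have hdeg : (descPochhammerStep lam n).natDegree < n + 1 :=
    Nat.lt_succ_of_le (natDegree_descPochhammerStep_le lam n)
  have hcoeff_zero : (descPochhammerStep lam n).coeff 0 = 0 := by
    obtain ⟨m, rfl⟩ := Nat.exists_eq_add_of_le' hn
    simp [coeff_descPochhammerStep]
  rw [hR.factorial_smul_pow_apply_one, aeval_eq_sum_range' hdeg]
  symm
  calc _ = ∑ k ∈ Icc 1 n, (descPochhammerStep lam n).coeff k • R 1 ^ k :=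
        sum_congr rfl fun k _ => by
          rw [coeff_descPochhammerStep, stirlingFirst_eq_nat_stirlingFirst, neg_pow lam]
    _ = _ := sum_subset (fun k hk => by simp at hk ⊢; omega) fun k hk hk' => by
        obtain rfl : k = 0 := by simp at hk hk'; omega
        rw [hcoeff_zero, zero_smul]

/-- `n! Rⁿ(1) = Σ_{k=1}^n (-1)^(n-k) λ^(n-k) s(n,k) (R 1)^k`. -/
theorem rb_stirling_first {F A : Type*} [Field F] [CharZero F] [Ring A] [Algebra F A]
    (lam : F) (R : A →ₗ[F] A) (hR : IsRotaBaxter F lam R) (n : ℕ) (hn : 1 ≤ n) :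
    ((Nat.factorial n : ℕ) : F) • ((R ^ n) (1 : A))
      = ∑ k ∈ Finset.Icc 1 n,
          ((-1 : F) ^ (n - k) * lam ^ (n - k) * (stirlingFirst n k : F)) • (R 1) ^ k :=
  rb_stirling_first_general lam R hR n hn
end

section
/- Let A be a unital associative algebra over a field of characteristic zero and R a Rota–Baxter operator of weight -1 on A, with a = R(1). Then R(aⁿ) = Fₙ(a) for all n ∈ ℕ, where Fₙ is the Faulhaber polynomial satisfying Fₙ(m) = Σ_{j=1}^{m} jⁿ for positive integers m. -/
/-- The Faulhaber polynomial
`Fₙ(a) = (1/(n+1)) Σ_{j=0}^{n} (-1)^j C(n+1,j) B_j a^{n+1-j}`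
evaluated at an element `a` of an `F`-algebra. -/
noncomputable def faulhaber {F A : Type*} [Field F] [CharZero F] [Ring A] [Algebra F A]
    (n : ℕ) (a : A) : A :=
  (((n : F) + 1)⁻¹) •
    ∑ j ∈ Finset.range (n + 1),
      ((-1 : F) ^ j * ((n + 1).choose j : F) * ((bernoulli j : ℚ) : F)) • a ^ (n + 1 - j)

open Finset Polynomial

noncomputable def faulhaberCoeff (n j : ℕ) : ℚ :=
  ((n : ℚ) + 1)⁻¹ * ((-1) ^ j * ((n + 1).choose j : ℚ) * _root_.bernoulli j)

noncomputable def faulhaberPoly (n : ℕ) : ℚ[X] :=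
  ∑ j ∈ range (n + 1), C (faulhaberCoeff n j) * X ^ (n + 1 - j)

lemma faulhaberCoeff_zero (n : ℕ) : faulhaberCoeff n 0 = ((n : ℚ) + 1)⁻¹ := by
  simp [faulhaberCoeff]

lemma eval_faulhaberPoly (n : ℕ) (x : ℚ) :
    (faulhaberPoly n).eval x = ∑ j ∈ range (n + 1), faulhaberCoeff n j * x ^ (n + 1 - j) := by
  simp [faulhaberPoly, eval_finsetSum]

lemma eval_natCast_faulhaberPoly (n m : ℕ) :
    (faulhaberPoly n).eval (m : ℚ) = ∑ k ∈ range m, ((k : ℚ) + 1) ^ n := by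
  have h := sum_Ico_pow m n
  rw [sum_Ico_eq_sum_range, add_tsub_cancel_right] at h
  simp only [add_comm 1, Nat.cast_add, Nat.cast_one] at h
  rw [eval_faulhaberPoly, h]
  refine sum_congr rfl fun j _ => ?_
  rw [faulhaberCoeff, bernoulli'_eq_bernoulli]
  ring

lemma natCast_add_one_mul_sum_range_pow (n m : ℕ) :
    ((m : ℚ) + 1) * ∑ k ∈ range m, ((k : ℚ) + 1) ^ n =
      ∑ k ∈ range m, ((k : ℚ) + 1) ^ (n + 1) +
        ∑ k ∈ range m, ∑ i ∈ range (k + 1), ((i : ℚ) + 1) ^ n := by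
  induction m with
  | zero => simp
  | succ m ih =>
    simp only [sum_range_succ _ m, Nat.cast_add, Nat.cast_one]
    linear_combination ih

lemma X_add_one_mul_faulhaberPoly (n : ℕ) :
    (X + 1) * faulhaberPoly n = faulhaberPoly (n + 1) +
      ∑ j ∈ range (n + 1), C (faulhaberCoeff n j) * faulhaberPoly (n + 1 - j) := by
  refine eq_of_infinite_eval_eq _ _ ((Set.infinite_range_of_injective Nat.cast_injective).mono ?_)
  rintro _ ⟨m, rfl⟩
  have h_succ (k : ℕ) :
      (faulhaberPoly n).eval ((k : ℚ) + 1) = ∑ i ∈ range (k + 1), ((i : ℚ) + 1) ^ n := by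
    exact_mod_cast eval_natCast_faulhaberPoly n (k + 1)
  simp only [Set.mem_ofPred_eq, eval_mul, eval_add, eval_X, eval_one, eval_finsetSum, eval_C,
    eval_natCast_faulhaberPoly]
  rw [natCast_add_one_mul_sum_range_pow]
  simp only [← h_succ, eval_faulhaberPoly, mul_sum]
  rw [sum_comm]

section Algebra

variable {F A : Type*} [Field F] [CharZero F] [Ring A] [Algebra F A]

lemma faulhaber_eq_sum (n : ℕ) (a : A) :
    faulhaber (F := F) n a = ∑ j ∈ range (n + 1), (faulhaberCoeff n j : F) • a ^ (n + 1 - j) := by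
  rw [faulhaber, smul_sum]
  refine sum_congr rfl fun j _ => ?_
  rw [smul_smul, faulhaberCoeff]
  push_cast
  ring_nf

lemma faulhaber_zero (a : A) : faulhaber (F := F) 0 a = a := by
  simp [faulhaber_eq_sum, faulhaberCoeff_zero]

lemma aeval_map_faulhaberPoly (n : ℕ) (a : A) :
    aeval a ((faulhaberPoly n).map (algebraMap ℚ F)) = faulhaber (F := F) n a := by
  simp [faulhaber_eq_sum, faulhaberPoly, Polynomial.map_sum, Algebra.smul_def]

lemma add_one_mul_faulhaber (n : ℕ) (a : A) :
    (a + 1) * faulhaber (F := F) n a = faulhaber (F := F) (n + 1) a +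
      ∑ j ∈ range (n + 1), (faulhaberCoeff n j : F) • faulhaber (F := F) (n + 1 - j) a := by
  have h := congrArg (fun p => aeval a (p.map (algebraMap ℚ F))) (X_add_one_mul_faulhaberPoly n)
  simpa [Polynomial.map_sum, aeval_map_faulhaberPoly, Algebra.smul_def] using h

end Algebra

lemma IsRotaBaxter.apply_apply_one_mul {F A : Type*} [Field F] [NonAssocRing A] [Module F A]
    {R : A →ₗ[F] A} (hR : IsRotaBaxter F (-1 : F) R) (y : A) :
    R (R 1 * y) = (R 1 + 1) * R y - R (R y) := by
  have h := hR 1 y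
  simp only [one_mul, neg_smul, one_smul, map_add, map_neg] at h
  rw [add_mul, one_mul, h]
  abel

/-- For an RB-operator `R` of weight `-1` on a unital associative algebra over a
field of characteristic zero with `a = R 1`, one has `R(aⁿ) = Fₙ(a)`. -/
theorem rb_faulhaber {F A : Type*} [Field F] [CharZero F] [Ring A] [Algebra F A]
    (R : A →ₗ[F] A) (hR : IsRotaBaxter F (-1 : F) R) (n : ℕ) :
    R ((R 1) ^ n) = faulhaber (F := F) n (R 1) := by
  induction n using Nat.strong_induction_on with
  | _ n IH =>
  rcases n with _ | m
  · simp [faulhaber_zero]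
  have hR_succ : R (R 1 ^ (m + 1)) = (R 1 + 1) * faulhaber (F := F) m (R 1) -
      ∑ j ∈ range (m + 1), (faulhaberCoeff m j : F) • R (R 1 ^ (m + 1 - j)) := by
    rw [pow_succ', hR.apply_apply_one_mul, IH m m.lt_succ_self, faulhaber_eq_sum, map_sum]
    simp only [map_smul]
  -- Both sides obey the same recursion, in which only the `j = 0` term involves index `m + 1`.
  have h_sum : ∑ j ∈ range (m + 1), (faulhaberCoeff m j : F) •
        (R (R 1 ^ (m + 1 - j)) - faulhaber (F := F) (m + 1 - j) (R 1)) =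
      (faulhaberCoeff m 0 : F) • (R (R 1 ^ (m + 1)) - faulhaber (F := F) (m + 1) (R 1)) :=
    sum_eq_single_of_mem 0 (by simp) fun j _ hj => by
      rw [IH (m + 1 - j) (by omega), sub_self, smul_zero]
  have h_diff : (1 + faulhaberCoeff m 0 : F) •
      (R (R 1 ^ (m + 1)) - faulhaber (F := F) (m + 1) (R 1)) = 0 := by
    rw [add_smul, one_smul, ← h_sum, hR_succ, add_one_mul_faulhaber]
    simp only [smul_sub, sum_sub_distrib]
    abel
  have h_ne : (1 + faulhaberCoeff m 0 : F) ≠ 0 := by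
    rw [faulhaberCoeff_zero]
    exact_mod_cast (by positivity : (1 + ((m : ℚ) + 1)⁻¹) ≠ 0)
  exact sub_eq_zero.mp ((smul_eq_zero_iff_right h_ne).mp h_diff)
end

section
/- Let A be a unital associative algebraic algebra over a field of characteristic zero and R a Rota–Baxter operator of weight 0 on A. Then R(1) is nilpotent. -/
open Polynomial

namespace Polynomial

variable {K : Type*} [Field K]

noncomputable def antideriv : K[X] →ₗ[K] K[X] :=
  lsum fun n => (n + 1 : K)⁻¹ • monomial (n + 1)

theorem antideriv_monomial (n : ℕ) (a : K) :
    antideriv (monomial n a) = monomial (n + 1) ((n + 1 : K)⁻¹ * a) := by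
  simp [antideriv, sum_monomial_index, smul_monomial]

theorem coeff_antideriv_zero (p : K[X]) : (antideriv p).coeff 0 = 0 := by
  induction p using Polynomial.induction_on' with
  | add p q hp hq => simp [hp, hq]
  | monomial n a => simp [antideriv_monomial, coeff_monomial]

theorem coeff_antideriv_succ (p : K[X]) (i : ℕ) :
    (antideriv p).coeff (i + 1) = (i + 1 : K)⁻¹ * p.coeff i := by
  induction p using Polynomial.induction_on' with
  | add p q hp hq => simp [hp, hq, mul_add]
  | monomial n a =>
    simp only [antideriv_monomial, coeff_monomial, add_left_inj]
    split_ifs with h <;> simp [h]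

theorem natDegree_antideriv_le (p : K[X]) : (antideriv p).natDegree ≤ p.natDegree + 1 := by
  rw [natDegree_le_iff_coeff_eq_zero]
  intro i hi
  obtain ⟨j, rfl⟩ : ∃ j, i = j + 1 := ⟨i - 1, by omega⟩
  rw [coeff_antideriv_succ, coeff_eq_zero_of_natDegree_lt (by omega), mul_zero]

variable [CharZero K]

@[simp]
theorem derivative_antideriv (p : K[X]) : derivative (antideriv p) = p := by
  ext i
  rw [coeff_derivative, coeff_antideriv_succ]
  field_simp

theorem exists_antideriv_eq_mul_C_mul_X {p : K[X]} (hp : p.Monic) (h : p ∣ antideriv p) :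
    ∃ b, antideriv p = p * (C b * X) := by
  obtain ⟨l, hl⟩ := h
  have hq : antideriv p ≠ 0 := fun h0 =>
    hp.ne_zero (by rw [← derivative_antideriv p, h0, map_zero])
  have hl0 : l ≠ 0 := by rintro rfl; exact hq (by rw [hl, mul_zero])
  have hroot : (antideriv p).IsRoot 0 := by
    rw [IsRoot, ← coeff_zero_eq_eval_zero, coeff_antideriv_zero]
  have hl_root : l.coeff 0 = 0 := by
    have hmult := derivative_rootMultiplicity_of_root hroot
    have hpos := (rootMultiplicity_pos hq).mpr hroot
    rw [derivative_antideriv, hl, rootMultiplicity_mul (hl ▸ hq)] at hmult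
    rw [hl, rootMultiplicity_mul (hl ▸ hq)] at hpos
    have : 0 < l.rootMultiplicity 0 := by omega
    rwa [rootMultiplicity_pos hl0, IsRoot, ← coeff_zero_eq_eval_zero] at this
  have hl_deg : l.natDegree ≤ 1 := by
    have := natDegree_antideriv_le p
    rw [hl, natDegree_mul hp.ne_zero hl0] at this
    omega
  refine ⟨l.coeff 1, ?_⟩
  conv_lhs => rw [hl, eq_X_add_C_of_natDegree_le_one hl_deg, hl_root, C_0, add_zero]

theorem eq_X_pow_of_antideriv_eq_mul_C_mul_X {p : K[X]} {b : K} (hp : p.Monic)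
    (h : antideriv p = p * (C b * X)) : p = X ^ p.natDegree := by
  have hcoeff (i : ℕ) : (i + 1 : K)⁻¹ * p.coeff i = b * p.coeff i := by
    rw [← coeff_antideriv_succ, h, ← mul_assoc, coeff_mul_X, coeff_mul_C, mul_comm]
  have hb : b = (p.natDegree + 1 : K)⁻¹ := by
    simpa [hp.coeff_natDegree] using (hcoeff p.natDegree).symm
  ext i
  rw [coeff_X_pow]
  split_ifs with hi
  · rw [hi, hp.coeff_natDegree]
  · have := hcoeff i
    rw [hb, ← sub_eq_zero, ← sub_mul, mul_eq_zero, sub_eq_zero, inv_inj] at this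
    exact this.resolve_left (by exact_mod_cast fun h => hi (by omega))

theorem eq_X_pow_of_dvd_antideriv {p : K[X]} (hp : p.Monic) (h : p ∣ antideriv p) :
    p = X ^ p.natDegree :=
  let ⟨_, hb⟩ := exists_antideriv_eq_mul_C_mul_X hp h
  eq_X_pow_of_antideriv_eq_mul_C_mul_X hp hb

end Polynomial

namespace IsRotaBaxter

section

variable {F A : Type*} [Field F] [Ring A] [Module F A] {R : A →ₗ[F] A}

theorem pow_apply_one_mul (hR : IsRotaBaxter F 0 R) (m : ℕ) :
    (R ^ m) 1 * R 1 = (m + 1) • (R ^ (m + 1)) 1 := by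
  induction m with
  | zero => simp
  | succ m ih =>
    have h k : (R ^ (k + 1)) 1 = R ((R ^ k) 1) := by rw [pow_succ', Module.End.mul_apply]
    rw [h, hR, mul_one, ih, zero_smul, add_zero, ← h, ← succ_nsmul', map_nsmul, ← h]

theorem apply_one_pow (hR : IsRotaBaxter F 0 R) (m : ℕ) :
    R 1 ^ m = m.factorial • (R ^ m) 1 := by
  induction m with
  | zero => simp
  | succ m ih =>
    rw [pow_succ, ih, smul_mul_assoc, hR.pow_apply_one_mul, smul_smul, Nat.factorial_succ,
      mul_comm]

theorem succ_nsmul_apply_apply_one_pow (hR : IsRotaBaxter F 0 R) (m : ℕ) :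
    (m + 1) • R (R 1 ^ m) = R 1 ^ (m + 1) := by
  rw [hR.apply_one_pow, hR.apply_one_pow, map_nsmul, smul_smul, ← Module.End.mul_apply,
    ← pow_succ', Nat.factorial_succ]

end

theorem apply_aeval {F A : Type*} [Field F] [CharZero F] [Ring A] [Algebra F A]
    {R : A →ₗ[F] A} (hR : IsRotaBaxter F 0 R) (p : F[X]) :
    R (aeval (R 1) p) = aeval (R 1) (antideriv p) := by
  induction p using Polynomial.induction_on' with
  | add p q hp hq => rw [map_add, map_add, hp, hq, map_add, map_add]
  | monomial n a =>
    rw [antideriv_monomial, aeval_monomial, aeval_monomial, ← Algebra.smul_def,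
      ← Algebra.smul_def, map_smul, ← hR.succ_nsmul_apply_apply_one_pow,
      ← Nat.cast_smul_eq_nsmul F, smul_smul]
    congr 1
    push_cast
    field_simp

end IsRotaBaxter

/-- For a weight-zero RB-operator `R` on a unital associative algebraic algebra
over a field of characteristic zero, `R 1` is nilpotent. -/
theorem rb_weight_zero_R1_nilpotent {F A : Type*} [Field F] [CharZero F]
    [Ring A] [Algebra F A]
    (halg : ∀ x : A, IsAlgebraic F x)
    (R : A →ₗ[F] A) (hR : IsRotaBaxter F (0 : F) R) :
    IsNilpotent (R 1) := by
  have hmonic : (minpoly F (R 1)).Monic := minpoly.monic (halg (R 1)).isIntegral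
  have hdvd : minpoly F (R 1) ∣ antideriv (minpoly F (R 1)) :=
    minpoly.dvd F _ (by rw [← hR.apply_aeval, minpoly.aeval, map_zero])
  have hroot := minpoly.aeval F (R 1)
  rw [eq_X_pow_of_dvd_antideriv hmonic hdvd, map_pow, aeval_X] at hroot
  exact ⟨_, hroot⟩
end

section
/- Let A be a commutative associative algebra over a field of characteristic zero, e a nonzero idempotent of A, and R a Rota–Baxter operator of weight 0 on A. Then e is not in the image of R. -/
namespace IsRotaBaxter

variable {F A : Type*} [Field F]

theorem weight_zero_apply [NonUnitalNonAssocRing A] [Module F A] {R : A →ₗ[F] A}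
    (hR : IsRotaBaxter F 0 R) (x y : A) : R x * R y = R (R x * y) + R (x * R y) := by
  rw [hR x y, zero_smul, add_zero, map_add]

variable [NonUnitalCommRing A] [Module F A] {R : A →ₗ[F] A}

theorem apply_mul_self (hR : IsRotaBaxter F 0 R) (x : A) :
    R x * R x = R (x * R x) + R (x * R x) := by
  rw [hR.weight_zero_apply, mul_comm (R x) x]

theorem apply_eq_zero_of_isIdempotentElem (hR : IsRotaBaxter F 0 R) {a : A}
    (he : IsIdempotentElem (R a)) : R a = 0 := by
  set e := R a
  set u := R (a * e)
  have e_eq : e = u + u := by rw [← he.eq, hR.apply_mul_self]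
  have e_mul_u : e * u = u + R (a * u) := by
    rw [hR.weight_zero_apply, mul_left_comm, he.eq]
  have e_eq_add : e = e + u :=
    calc e = e * e := he.eq.symm
      _ = e * u + e * u := by rw [← mul_add, ← e_eq]
      _ = (u + u) + R (a * (u + u)) := by rw [e_mul_u, mul_add, map_add]; abel
      _ = e + u := by rw [← e_eq]
  have u_eq_zero : u = 0 := left_eq_add.mp e_eq_add
  rw [e_eq, u_eq_zero, add_zero]

end IsRotaBaxter

theorem rb_weight_zero_idempotent_not_in_image_general {F A : Type*} [Field F]
    [NonUnitalCommRing A] [Module F A]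
    (e : A) (he : e * e = e) (hne : e ≠ 0)
    (R : A →ₗ[F] A) (hR : IsRotaBaxter F (0 : F) R) :
    e ∉ LinearMap.range R := by
  rintro ⟨a, rfl⟩
  exact hne (hR.apply_eq_zero_of_isIdempotentElem he)

/-- In a commutative associative algebra over a field of characteristic zero, a
nonzero idempotent is not in the image of a weight-zero RB-operator. -/
theorem rb_weight_zero_idempotent_not_in_image {F A : Type*} [Field F] [CharZero F]
    [NonUnitalCommRing A] [Module F A] [SMulCommClass F A A] [IsScalarTower F A A]
    (e : A) (he : e * e = e) (hne : e ≠ 0)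
    (R : A →ₗ[F] A) (hR : IsRotaBaxter F (0 : F) R) :
    e ∉ LinearMap.range R :=
  rb_weight_zero_idempotent_not_in_image_general e he hne R hR
end

section
/- Let A be an algebra, e an idempotent of A, and R a Rota–Baxter operator of weight 0 on A. Then e does not lie in Im(R²) ∩ ker(R). -/
namespace IsRotaBaxter

variable {F A : Type*} [Field F] [NonUnitalNonAssocRing A] [Module F A] {R : A →ₗ[F] A}

theorem apply_mul_apply (hR : IsRotaBaxter F 0 R) (x y : A) :
    R x * R y = R (R x * y + x * R y) := by
  simpa using hR x y

theorem map_apply_mul_eq_zero_of_mem_ker (hR : IsRotaBaxter F 0 R) {k : A} (hk : R k = 0)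
    (x : A) : R (R x * k) = 0 := by
  simpa [hk] using (hR.apply_mul_apply x k).symm

theorem map_mul_apply_eq_zero_of_mem_ker (hR : IsRotaBaxter F 0 R) {k : A} (hk : R k = 0)
    (x : A) : R (k * R x) = 0 := by
  simpa [hk] using (hR.apply_mul_apply k x).symm

theorem mul_self_eq_zero_of_mem_range_sq_inf_ker (hR : IsRotaBaxter F 0 R) {e : A}
    (he : e ∈ (LinearMap.range (R ∘ₗ R) ⊓ LinearMap.ker R : Submodule F A)) : e * e = 0 := by
  obtain ⟨⟨x, rfl⟩, hker⟩ := he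
  have hker : R (R (R x)) = 0 := hker
  calc R (R x) * R (R x) = R (R (R x) * R x) + R (R x * R (R x)) := by
        rw [hR.apply_mul_apply, map_add]
    _ = 0 := by
        rw [hR.map_mul_apply_eq_zero_of_mem_ker hker, hR.map_apply_mul_eq_zero_of_mem_ker hker,
          add_zero]

end IsRotaBaxter

theorem rb_idempotent_not_in_imR2_cap_ker_general {F A : Type*} [Field F]
    [NonUnitalNonAssocRing A] [Module F A]
    (e : A) (he : e * e = e) (hne : e ≠ 0)
    (R : A →ₗ[F] A) (hR : IsRotaBaxter F (0 : F) R) :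
    e ∉ (LinearMap.range (R ∘ₗ R) ⊓ LinearMap.ker R : Submodule F A) := fun hmem =>
  hne (he ▸ hR.mul_self_eq_zero_of_mem_range_sq_inf_ker hmem)

/-- For a weight-zero RB-operator `R` on an algebra, a (nonzero) idempotent `e`
does not lie in `Im(R²) ∩ ker R`. -/
theorem rb_idempotent_not_in_imR2_cap_ker {F A : Type*} [Field F]
    [NonUnitalNonAssocRing A] [Module F A] [SMulCommClass F A A] [IsScalarTower F A A]
    (e : A) (he : e * e = e) (hne : e ≠ 0)
    (R : A →ₗ[F] A) (hR : IsRotaBaxter F (0 : F) R) :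
    e ∉ (LinearMap.range (R ∘ₗ R) ⊓ LinearMap.ker R : Submodule F A) :=
  rb_idempotent_not_in_imR2_cap_ker_general e he hne R hR
end

section
/- Let A be an algebra with an invertible derivation d of weight λ, i.e., d(xy) = d(x)y + xd(y) + λd(x)d(y) for all x, y. Then d⁻¹ is a Rota–Baxter operator of weight λ on A. -/
/-- Applying `d` to the Rota–Baxter identity for `d⁻¹` at `(d u, d v)` gives the weighted
Leibniz rule for `d` at `(u, v)`. -/
theorem isRotaBaxter_symm_iff {F A : Type*} [Field F] [NonUnitalNonAssocRing A] [Module F A]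
    (lam : F) (d : A ≃ₗ[F] A) :
    IsRotaBaxter F lam d.symm.toLinearMap ↔
      ∀ x y : A, d (x * y) = d x * y + x * d y + lam • (d x * d y) := by
  constructor
  · intro hR u v
    have h := congrArg d (hR (d u) (d v))
    simp only [LinearEquiv.coe_coe, LinearEquiv.symm_apply_apply,
      LinearEquiv.apply_symm_apply] at h
    rw [h]
    abel
  · intro hd x y
    apply d.injective
    simp only [LinearEquiv.coe_coe, LinearEquiv.apply_symm_apply, hd]
    abel

theorem rb_inverse_of_weighted_derivation_general {F A : Type*} [Field F]
    [NonUnitalNonAssocRing A] [Module F A]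
    (lam : F) (d : A ≃ₗ[F] A)
    (hd : ∀ x y : A, d (x * y) = d x * y + x * d y + lam • (d x * d y)) :
    IsRotaBaxter F lam d.symm.toLinearMap :=
  (isRotaBaxter_symm_iff lam d).2 hd

/-- If `d` is an invertible derivation of weight `lam` on an algebra `A`, then
`d⁻¹` is a Rota–Baxter operator of weight `lam` on `A`. -/
theorem rb_inverse_of_weighted_derivation {F A : Type*} [Field F]
    [NonUnitalNonAssocRing A] [Module F A] [SMulCommClass F A A] [IsScalarTower F A A]
    (lam : F) (d : A ≃ₗ[F] A)
    (hd : ∀ x y : A, d (x * y) = d x * y + x * d y + lam • (d x * d y)) :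
    IsRotaBaxter F lam d.symm.toLinearMap :=
  rb_inverse_of_weighted_derivation_general lam d hd
end
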